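/- Let θ be an antimorphic involution and w ∈ Σ*. The set C_θ(w) contains at least one palindrome if and only if w = u·θ(xᴿ)·x for some words u, x with u a palindrome, or w = y·v·θ(yᴿ) for some words y, v with v a palindrome. -/
import Mathlib


variable {α : Type*}

/-- θ is an antimorphic involution on Σ* : θ(uv) = θ(v)θ(u) and θ² = id. -/
def IsAntimorphicInvolution (θ : List α → List α) : Prop :=
  (∀ u v : List α, θ (u ++ v) = θ v ++ θ u) ∧ ∀ u : List α, θ (θ u) = u

/-- The set of θ-conjugates of w: C_θ(w) = { θ(v) ++ u : w = u ++ v }. -/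
def thetaConjugates (θ : List α → List α) (w : List α) : Set (List α) :=
  {x | ∃ u v : List α, w = u ++ v ∧ x = θ v ++ u}

/-- n-fold concatenation power of a word. -/
def listPow (z : List α) (n : ℕ) : List α := (List.replicate n z).flatten

/-- A word is primitive if it is not a proper power. -/
def Primitive (z : List α) : Prop :=
  z ≠ [] ∧ ∀ (t : List α) (k : ℕ), z = listPow t k → k = 1

/-- The conjugacy class of w: { v ++ u : w = u ++ v }. -/
def conjClass (w : List α) : Set (List α) := {x | ∃ u v : List α, w = u ++ v ∧ x = v ++ u}

section Aux

variable {θ : List α → List α}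

lemma theta_nil (hθ : IsAntimorphicInvolution θ) : θ [] = [] := by
  have h := hθ.1 [] []
  simp only [List.append_nil] at h
  exact (List.append_right_eq_self.mp h.symm)

lemma theta_single_ne (hθ : IsAntimorphicInvolution θ) (a : α) : θ [a] ≠ [] := by
  intro h
  have h2 := hθ.2 [a]
  rw [h, theta_nil hθ] at h2
  exact absurd h2 (by simp)

lemma theta_single (hθ : IsAntimorphicInvolution θ) (a : α) : ∃ b, θ [a] = [b] := by
  match h : θ [a] with
  | [] => exact absurd h (theta_single_ne hθ a)
  | [b] => exact ⟨b, rfl⟩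
  | b :: c :: t =>
    exfalso
    have h2 := hθ.2 [a]
    rw [h] at h2
    have he : θ (b :: c :: t) = (θ t ++ θ [c]) ++ θ [b] := by
      have e1 : (b :: c :: t : List α) = [b] ++ ([c] ++ t) := rfl
      rw [e1, hθ.1, hθ.1]
    rw [he] at h2
    have hb := theta_single_ne hθ b
    have hc := theta_single_ne hθ c
    have hl := congrArg List.length h2
    simp only [List.length_append, List.length_cons, List.length_nil] at hl
    have h1 : 1 ≤ (θ [b]).length := List.length_pos_iff.mpr hb
    have h3 : 1 ≤ (θ [c]).length := List.length_pos_iff.mpr hc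
    omega

lemma theta_length (hθ : IsAntimorphicInvolution θ) (w : List α) :
    (θ w).length = w.length := by
  induction w with
  | nil => simp [theta_nil hθ]
  | cons a w ih =>
    have : (a :: w : List α) = [a] ++ w := rfl
    rw [this, hθ.1]
    obtain ⟨b, hb⟩ := theta_single hθ a
    simp [hb, ih]

lemma theta_reverse (hθ : IsAntimorphicInvolution θ) (w : List α) :
    θ w.reverse = (θ w).reverse := by
  induction w with
  | nil => simp [theta_nil hθ]
  | cons a w ih =>
    obtain ⟨b, hb⟩ := theta_single hθ a
    have e1 : (a :: w : List α) = [a] ++ w := rfl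
    rw [e1, List.reverse_append, hθ.1, hθ.1, List.reverse_append, ih]
    simp [hb]

lemma split_pref {A B C D : List α} (h : A ++ B = C ++ D)
    (hl : A.length ≤ C.length) : ∃ t, C = A ++ t ∧ B = t ++ D := by
  have hp : A <+: C := by
    refine List.prefix_of_prefix_length_le ?_ (List.prefix_append C D) hl
    rw [← h]; exact List.prefix_append A B
  obtain ⟨t, ht⟩ := hp
  refine ⟨t, ht.symm, ?_⟩
  rw [← ht, List.append_assoc] at h
  exact List.append_cancel_left h

end Aux

theorem stmt13 (θ : List α → List α) (hθ : IsAntimorphicInvolution θ) (w : List α) :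
    (∃ p ∈ thetaConjugates θ w, p.reverse = p) ↔
      ((∃ u x : List α, u.reverse = u ∧ w = u ++ θ x.reverse ++ x) ∨
       (∃ y v : List α, v.reverse = v ∧ w = y ++ v ++ θ y.reverse)) := by
  constructor
  · rintro ⟨p, ⟨u, v, hw, hp⟩, hpal⟩
    subst hp
    rw [List.reverse_append] at hpal
    -- hpal : u.reverse ++ (θ v).reverse = θ v ++ u
    by_cases hlen : u.length ≤ v.length
    · -- right disjunct
      obtain ⟨t, htv, htu⟩ := split_pref hpal
        (by rw [List.length_reverse, theta_length hθ]; exact hlen)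
      -- htv : θ v = u.reverse ++ t, htu : (θ v).reverse = t ++ u
      have h1 : θ v = u.reverse ++ t.reverse := by
        conv_lhs => rw [← List.reverse_reverse (θ v), htu]
        simp
      have htt : t = t.reverse := List.append_cancel_left (htv ▸ h1)
      have hv : v = θ t ++ θ u.reverse := by
        rw [← hθ.2 v, htv, hθ.1]
      refine Or.inr ⟨u, θ t, ?_, ?_⟩
      · rw [← theta_reverse hθ, ← htt]
      · rw [hw, hv, ← List.append_assoc]
    · -- left disjunct
      push_neg at hlen
      obtain ⟨s, hsu, hrest⟩ := split_pref hpal.symm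
        (by rw [List.length_reverse, theta_length hθ]; omega)
      -- hsu : u.reverse = θ v ++ s, hrest : u = s ++ (θ v).reverse
      have h1 : u = s.reverse ++ (θ v).reverse := by
        rw [← List.reverse_reverse u, hsu, List.reverse_append]
      have hss : s = s.reverse :=
        List.append_cancel_right (hrest ▸ h1 : s ++ (θ v).reverse = _)
      refine Or.inl ⟨s, v, hss.symm, ?_⟩
      rw [hw, hrest, theta_reverse hθ, List.append_assoc]
  · rintro (⟨u, x, hu, hw⟩ | ⟨y, v, hv, hw⟩)
    · refine ⟨θ x ++ (u ++ θ x.reverse), ⟨u ++ θ x.reverse, x, by rw [hw, List.append_assoc], rfl⟩, ?_⟩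
      rw [List.reverse_append, List.reverse_append, ← theta_reverse hθ,
        List.reverse_reverse, ← theta_reverse hθ, hu, List.append_assoc]
    · refine ⟨θ (v ++ θ y.reverse) ++ y, ⟨y, v ++ θ y.reverse, by rw [hw, List.append_assoc], rfl⟩, ?_⟩
      rw [hθ.1, hθ.2]
      rw [List.reverse_append, List.reverse_append, List.reverse_reverse,
        ← theta_reverse hθ, hv, List.append_assoc]
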